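/- Let A be a symmetrized Hopf algebroid such that the R-module A^R (via a·r = a s_R(r)) is finitely generated projective. Then a left integral ℓ ∈ I^L(A) is non-degenerate if and only if the single map ℓ_R : A* → A, φ* ↦ φ* ⇀ ℓ = ℓ⁽²⁾ t_R(φ*(ℓ⁽¹⁾)), is bijective (i.e., bijectivity of ℓ_R automatically implies bijectivity of _Rℓ). -/

import Mathlib

open scoped TensorProduct

namespace HopfAlgd

variable (A : Type*) [Ring A]

/-- `x ⊗ (y ⊗ z) ↦ (y * x) ⊗ z`. -/
noncomputable def m13 : A ⊗[ℤ] (A ⊗[ℤ] A) →ₗ[ℤ] A ⊗[ℤ] A :=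
  (LinearMap.rTensor A (LinearMap.mul' ℤ A)) ∘ₗ
  (TensorProduct.assoc ℤ A A A).symm.toLinearMap ∘ₗ
  (LinearMap.lTensor A (TensorProduct.comm ℤ A A).toLinearMap) ∘ₗ
  (TensorProduct.assoc ℤ A A A).toLinearMap ∘ₗ
  (TensorProduct.comm ℤ A (A ⊗[ℤ] A)).toLinearMap

/-- `x ⊗ (y ⊗ z) ↦ y ⊗ (z * x)`. -/
noncomputable def m23 : A ⊗[ℤ] (A ⊗[ℤ] A) →ₗ[ℤ] A ⊗[ℤ] A :=
  (LinearMap.lTensor A (LinearMap.mul' ℤ A)) ∘ₗ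
  (TensorProduct.assoc ℤ A A A).toLinearMap ∘ₗ
  (TensorProduct.comm ℤ A (A ⊗[ℤ] A)).toLinearMap

/-- `(x ⊗ y) ⊗ z ↦ (x * z) ⊗ y`. -/
noncomputable def m13' : (A ⊗[ℤ] A) ⊗[ℤ] A →ₗ[ℤ] A ⊗[ℤ] A :=
  (LinearMap.rTensor A (LinearMap.mul' ℤ A)) ∘ₗ
  (TensorProduct.assoc ℤ A A A).symm.toLinearMap ∘ₗ
  (LinearMap.lTensor A (TensorProduct.comm ℤ A A).toLinearMap) ∘ₗ
  (TensorProduct.assoc ℤ A A A).toLinearMap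

/-- `(x ⊗ y) ⊗ z ↦ x ⊗ (y * z)`. -/
noncomputable def m23' : (A ⊗[ℤ] A) ⊗[ℤ] A →ₗ[ℤ] A ⊗[ℤ] A :=
  (LinearMap.lTensor A (LinearMap.mul' ℤ A)) ∘ₗ (TensorProduct.assoc ℤ A A A).toLinearMap

variable {A}

/-- The subgroup of `A ⊗[ℤ] A` implementing the tensor product over a base ring, where the
relevant right action on the first factor is `f` and left action on the second factor is `g`. -/
def trel {L : Type*} (f g : L → A → A) : Submodule ℤ (A ⊗[ℤ] A) :=
  Submodule.span ℤ {x | ∃ (l : L) (a b : A), x = f l a ⊗ₜ[ℤ] b - a ⊗ₜ[ℤ] g l b}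

/-- Analogue of `trel` for threefold tensor products. -/
def trel3 {L R : Type*} (f g : L → A → A) (f' g' : R → A → A) :
    Submodule ℤ (A ⊗[ℤ] (A ⊗[ℤ] A)) :=
  Submodule.span ℤ
    ({x | ∃ (l : L) (a b c : A),
        x = f l a ⊗ₜ[ℤ] (b ⊗ₜ[ℤ] c) - a ⊗ₜ[ℤ] (g l b ⊗ₜ[ℤ] c)} ∪
     {x | ∃ (r : R) (a b c : A),
        x = a ⊗ₜ[ℤ] (f' r b ⊗ₜ[ℤ] c) - a ⊗ₜ[ℤ] (b ⊗ₜ[ℤ] g' r c)})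

variable (A) in
/-- The data of a left bialgebroid: source and target maps, a chosen (Sweedler
representative of the) coproduct, and the counit. -/
structure LeftBialgebroidData (L : Type*) [Ring L] where
  s : L →+* A
  t : L →+ A
  t_one : t 1 = 1
  t_mul : ∀ l l', t (l * l') = t l' * t l
  st_comm : ∀ l l', s l * t l' = t l' * s l
  Δ : A →+ A ⊗[ℤ] A
  π : A →+ L

variable {L R : Type*} [Ring L] [Ring R]

/-- The subgroup of `A ⊗[ℤ] A` by which one quotients to get `A_L ⊗_L _L A`. -/
def LeftBialgebroidData.rel (B : LeftBialgebroidData A L) : Submodule ℤ (A ⊗[ℤ] A) :=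
  trel (fun l a => B.t l * a) (fun l b => B.s l * b)

def LeftBialgebroidData.rel3 (B : LeftBialgebroidData A L) :
    Submodule ℤ (A ⊗[ℤ] (A ⊗[ℤ] A)) :=
  trel3 (fun l a => B.t l * a) (fun l b => B.s l * b)
        (fun l a => B.t l * a) (fun l b => B.s l * b)

variable (A) in
/-- A left bialgebroid (Takeuchi `×_L`-bialgebra), with the comonoid structure encoded via a
chosen additive lift `Δ` of the coproduct `γ_L`; all equalities in `A ⊗_L A` are expressed
as membership of differences in the relation subgroup `rel`. -/
structure LeftBialgebroid (L : Type*) [Ring L] extends LeftBialgebroidData A L where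
  coassoc : ∀ a, Sub.sub ((LinearMap.lTensor A Δ.toIntLinearMap) (Δ a))
      ((TensorProduct.assoc ℤ A A A) ((LinearMap.rTensor A Δ.toIntLinearMap) (Δ a)))
      ∈ toLeftBialgebroidData.rel3
  cros : ∀ a l, (LinearMap.rTensor A (LinearMap.mulRight ℤ (t l))) (Δ a)
      - (LinearMap.lTensor A (LinearMap.mulRight ℤ (s l))) (Δ a) ∈ toLeftBialgebroidData.rel
  Δ_one : Δ 1 - (1 : A) ⊗ₜ[ℤ] (1 : A) ∈ toLeftBialgebroidData.rel
  Δ_mul : ∀ a b, Δ (a * b) - Δ a * Δ b ∈ toLeftBialgebroidData.rel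
  counit_s : ∀ a, LinearMap.mul' ℤ A
      ((LinearMap.rTensor A (s.toAddMonoidHom.comp π).toIntLinearMap) (Δ a)) = a
  counit_t : ∀ a, LinearMap.mul' ℤ A ((TensorProduct.comm ℤ A A)
      ((LinearMap.lTensor A (t.comp π).toIntLinearMap) (Δ a))) = a
  π_one : π 1 = 1
  π_s : ∀ a b, π (a * s (π b)) = π (a * b)
  π_t : ∀ a b, π (a * t (π b)) = π (a * b)
  π_bimod : ∀ l l' a, π (s l * (t l' * a)) = l * π a * l'

def LeftBialgebroid.rel (B : LeftBialgebroid A L) : Submodule ℤ (A ⊗[ℤ] A) :=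
  B.toLeftBialgebroidData.rel

variable (A) in
/-- The data of a right bialgebroid. -/
structure RightBialgebroidData (R : Type*) [Ring R] where
  s : R →+* A
  t : R →+ A
  t_one : t 1 = 1
  t_mul : ∀ r r', t (r * r') = t r' * t r
  st_comm : ∀ r r', s r * t r' = t r' * s r
  Δ : A →+ A ⊗[ℤ] A
  π : A →+ R

/-- The subgroup of `A ⊗[ℤ] A` by which one quotients to get `A^R ⊗_R ^R A`. -/
def RightBialgebroidData.rel (B : RightBialgebroidData A R) : Submodule ℤ (A ⊗[ℤ] A) :=
  trel (fun r a => a * B.s r) (fun r b => b * B.t r)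

def RightBialgebroidData.rel3 (B : RightBialgebroidData A R) :
    Submodule ℤ (A ⊗[ℤ] (A ⊗[ℤ] A)) :=
  trel3 (fun r a => a * B.s r) (fun r b => b * B.t r)
        (fun r a => a * B.s r) (fun r b => b * B.t r)

variable (A) in
/-- A right bialgebroid, with chosen additive lift `Δ` of the coproduct `γ_R`. -/
structure RightBialgebroid (R : Type*) [Ring R] extends RightBialgebroidData A R where
  coassoc : ∀ a, Sub.sub ((LinearMap.lTensor A Δ.toIntLinearMap) (Δ a))
      ((TensorProduct.assoc ℤ A A A) ((LinearMap.rTensor A Δ.toIntLinearMap) (Δ a)))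
      ∈ toRightBialgebroidData.rel3
  cros : ∀ a r, (LinearMap.rTensor A (LinearMap.mulLeft ℤ (s r))) (Δ a)
      - (LinearMap.lTensor A (LinearMap.mulLeft ℤ (t r))) (Δ a) ∈ toRightBialgebroidData.rel
  Δ_one : Δ 1 - (1 : A) ⊗ₜ[ℤ] (1 : A) ∈ toRightBialgebroidData.rel
  Δ_mul : ∀ a b, Δ (a * b) - Δ a * Δ b ∈ toRightBialgebroidData.rel
  counit_s : ∀ a, LinearMap.mul' ℤ A
      ((LinearMap.lTensor A (s.toAddMonoidHom.comp π).toIntLinearMap) (Δ a)) = a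
  counit_t : ∀ a, LinearMap.mul' ℤ A ((TensorProduct.comm ℤ A A)
      ((LinearMap.rTensor A (t.comp π).toIntLinearMap) (Δ a))) = a
  π_one : π 1 = 1
  π_s : ∀ a b, π (s (π a) * b) = π (a * b)
  π_t : ∀ a b, π (t (π a) * b) = π (a * b)
  π_bimod : ∀ r r' a, π (a * s r' * t r) = r * π a * r'

def RightBialgebroid.rel (B : RightBialgebroid A R) : Submodule ℤ (A ⊗[ℤ] A) :=
  B.toRightBialgebroidData.rel

/-- The expression `a ↦ ∑ (f a₍₁₎)₍₁'₎ a₍₂₎ ⊗ (f a₍₁₎)₍₂'₎` (applied to `Δ a`). -/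
noncomputable def axsExpr (Δ : A →+ A ⊗[ℤ] A) (f : A →+ A) :
    A ⊗[ℤ] A →ₗ[ℤ] A ⊗[ℤ] A :=
  m13' A ∘ₗ LinearMap.rTensor A (Δ.toIntLinearMap ∘ₗ f.toIntLinearMap)

/-- The expression `a ↦ ∑ (f a₍₂₎)₍₁'₎ ⊗ (f a₍₂₎)₍₂'₎ a₍₁₎` (applied to `Δ a`). -/
noncomputable def axsiExpr (Δ : A →+ A ⊗[ℤ] A) (f : A →+ A) :
    A ⊗[ℤ] A →ₗ[ℤ] A ⊗[ℤ] A :=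
  m23 A ∘ₗ LinearMap.lTensor A (Δ.toIntLinearMap ∘ₗ f.toIntLinearMap)

/-- Definition 4.1 of Böhm–Szlachányi: a Hopf algebroid is a left bialgebroid together with a
ring anti-automorphism `S` such that `S ∘ t_L = s_L` and the two antipode axioms hold. -/
structure IsHopfAlgebroid (B : LeftBialgebroid A L) (S : A ≃+ A) : Prop where
  anti_mul : ∀ a b, S (a * b) = S b * S a
  one_map : S 1 = 1
  S_t : ∀ l, S (B.t l) = B.s l
  axs : ∀ a, axsExpr B.Δ S.toAddMonoidHom (B.Δ a) - (1 : A) ⊗ₜ[ℤ] S a ∈ B.rel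
  axsi : ∀ a, axsiExpr B.Δ S.symm.toAddMonoidHom (B.Δ a) - S.symm a ⊗ₜ[ℤ] (1 : A) ∈ B.rel

/-- The relation subgroup for `A_L ⊗_L (_L A^R) ⊗_R (^R A)`. -/
def mixedRel₁ (Bl : LeftBialgebroidData A L) (Br : RightBialgebroidData A R) :
    Submodule ℤ (A ⊗[ℤ] (A ⊗[ℤ] A)) :=
  trel3 (fun l a => Bl.t l * a) (fun l b => Bl.s l * b)
        (fun r b => b * Br.s r) (fun r c => c * Br.t r)

/-- The relation subgroup for `A^R ⊗_R (^R A_L) ⊗_L (_L A)`. -/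
def mixedRel₂ (Bl : LeftBialgebroidData A L) (Br : RightBialgebroidData A R) :
    Submodule ℤ (A ⊗[ℤ] (A ⊗[ℤ] A)) :=
  trel3 (fun r a => a * Br.s r) (fun r b => b * Br.t r)
        (fun l b => Bl.t l * b) (fun l c => Bl.s l * c)

variable (A L R) in
/-- A symmetrized Hopf algebroid in the sense of Proposition 4.2 (iii) of Böhm–Szlachányi:
compatible left and right bialgebroid structures over anti-isomorphic base rings, connected
by an additive bijection `S` satisfying the twisted bimodule and antipode conditions. -/
structure SymHopfAlgebroid : Type _ where
  left : LeftBialgebroid A L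
  right : RightBialgebroid A R
  S : A ≃+ A
  base_op : Nonempty (L ≃+* Rᵐᵒᵖ)
  st_img : ∀ l, ∃ r, left.s l = right.t r
  ts_img : ∀ r, ∃ l, right.t r = left.s l
  ts_img' : ∀ l, ∃ r, left.t l = right.s r
  st_img' : ∀ r, ∃ l, right.s r = left.t l
  mixed₁ : ∀ a, Sub.sub ((TensorProduct.assoc ℤ A A A)
        ((LinearMap.rTensor A left.Δ.toIntLinearMap) (right.Δ a)))
      ((LinearMap.lTensor A right.Δ.toIntLinearMap) (left.Δ a))
      ∈ mixedRel₁ left.toLeftBialgebroidData right.toRightBialgebroidData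
  mixed₂ : ∀ a, Sub.sub ((TensorProduct.assoc ℤ A A A)
        ((LinearMap.rTensor A right.Δ.toIntLinearMap) (left.Δ a)))
      ((LinearMap.lTensor A left.Δ.toIntLinearMap) (right.Δ a))
      ∈ mixedRel₂ left.toLeftBialgebroidData right.toRightBialgebroidData
  S_twist_L : ∀ l l' a, S (left.t l * a * left.t l') = left.s l' * S a * left.s l
  S_twist_R : ∀ r r' a, S (right.t r' * a * right.t r) = right.s r * S a * right.s r'
  antipode_L : ∀ a, LinearMap.mul' ℤ A
      ((LinearMap.rTensor A S.toAddMonoidHom.toIntLinearMap) (left.Δ a))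
      = right.s (right.π a)
  antipode_R : ∀ a, LinearMap.mul' ℤ A
      ((LinearMap.lTensor A S.toAddMonoidHom.toIntLinearMap) (right.Δ a))
      = left.s (left.π a)

namespace SymHopfAlgebroid

variable (H : SymHopfAlgebroid A L R)

/-- Left integrals: invariants of the left regular module. -/
def IsLeftIntegral (ℓ : A) : Prop := ∀ a, a * ℓ = H.left.s (H.left.π a) * ℓ

/-- Right integrals: invariants of the right regular module. -/
def IsRightIntegral (x : A) : Prop := ∀ a, x * a = x * H.right.s (H.right.π a)

/-- Membership in the dual `A^* = Hom(A^R, R^R)`. -/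
def InAstarR (φ : A →+ R) : Prop := ∀ a r, φ (a * H.right.s r) = φ a * r

/-- Membership in the dual `^*A = Hom(^R A, ^R R)`. -/
def InstarAR (φ : A →+ R) : Prop := ∀ a r, φ (a * H.right.t r) = r * φ a

/-- Membership in the dual `A_* = Hom(A_L, L_L)`. -/
def InAstarL (φ : A →+ L) : Prop := ∀ a l, φ (H.left.t l * a) = φ a * l

/-- Membership in the dual `_*A = Hom(_L A, _L L)`. -/
def InstarAL (φ : A →+ L) : Prop := ∀ a l, φ (H.left.s l * a) = l * φ a

/-- `φ ⇀ a = a⁽²⁾ t_R (φ a⁽¹⁾)`. -/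
noncomputable def rharp (φ : A →+ R) (a : A) : A :=
  LinearMap.mul' ℤ A ((TensorProduct.comm ℤ A A)
    ((LinearMap.rTensor A (H.right.t.comp φ).toIntLinearMap) (H.right.Δ a)))

/-- `φ ⇁ a = a⁽¹⁾ s_R (φ a⁽²⁾)`. -/
noncomputable def lharp (φ : A →+ R) (a : A) : A :=
  LinearMap.mul' ℤ A
    ((LinearMap.lTensor A (H.right.s.toAddMonoidHom.comp φ).toIntLinearMap) (H.right.Δ a))

/-- `a ↼ φ = s_L (φ a₍₁₎) a₍₂₎`. -/
noncomputable def rharpL (φ : A →+ L) (a : A) : A :=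
  LinearMap.mul' ℤ A
    ((LinearMap.rTensor A (H.left.s.toAddMonoidHom.comp φ).toIntLinearMap) (H.left.Δ a))

/-- `a ↽ φ = t_L (φ a₍₂₎) a₍₁₎`. -/
noncomputable def lharpL (φ : A →+ L) (a : A) : A :=
  LinearMap.mul' ℤ A ((TensorProduct.comm ℤ A A)
    ((LinearMap.lTensor A (H.left.t.comp φ).toIntLinearMap) (H.left.Δ a)))

/-- Non-degeneracy of a left integral: the maps `ℓ_R : A^* → A` and `_Rℓ : ^*A → A`
are bijective. -/
def IsNonDegLeftIntegral (ℓ : A) : Prop :=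
  H.IsLeftIntegral ℓ ∧
  Function.Bijective (fun φ : {φ : A →+ R // H.InAstarR φ} => H.rharp φ.1 ℓ) ∧
  Function.Bijective (fun φ : {φ : A →+ R // H.InstarAR φ} => H.lharp φ.1 ℓ)

end SymHopfAlgebroid

end HopfAlgd

/-!
Both dualities are linked by the pairing identity `β (ψ ⇁ a) = ψ (β ⇀ a)` for `β ∈ A*` and
`ψ ∈ *A`. If `ℓ_R` is onto, every `x ∈ A` is some `β ⇀ ℓ`, so `ψ` is determined by `ψ ⇁ ℓ`:
`_Rℓ` is injective. If `ℓ_R` is bijective, then for `v ∈ A` the functional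
`ψ_v x := (ℓ_R⁻¹ x) v` lies in `*A` (because `ℓ_R (r φ) = ℓ_R φ · t_R r`), and the pairing
identity gives `β (ψ_v ⇁ ℓ) = β v` for all `β ∈ A*`; a finite dual basis of `A^R` then forces
`ψ_v ⇁ ℓ = v`.
-/

open Function

namespace HopfAlgd
namespace SymHopfAlgebroid

variable {A L R : Type*} [Ring A] [Ring L] [Ring R] (H : SymHopfAlgebroid A L R)

theorem apply_lharp_eq_apply_rharp {β ψ : A →+ R} (hβ : H.InAstarR β) (hψ : H.InstarAR ψ)
    (a : A) : β (H.lharp ψ a) = ψ (H.rharp β a) := by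
  unfold lharp rharp
  induction H.right.Δ a using TensorProduct.induction_on with
  | zero => simp
  | tmul u v =>
    simp only [LinearMap.rTensor_tmul, LinearMap.lTensor_tmul, TensorProduct.comm_tmul,
      LinearMap.mul'_apply, AddMonoidHom.coe_toIntLinearMap, AddMonoidHom.coe_comp,
      Function.comp_apply, RingHom.toAddMonoidHom_eq_coe, AddMonoidHom.coe_coe]
    rw [hβ u (ψ v), hψ v (β u)]
  | add x y hx hy => simp only [map_add, hx, hy]

theorem rharp_add (φ₁ φ₂ : A →+ R) (a : A) :
    H.rharp (φ₁ + φ₂) a = H.rharp φ₁ a + H.rharp φ₂ a := by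
  unfold rharp
  induction H.right.Δ a using TensorProduct.induction_on with
  | zero => simp
  | tmul u v =>
    simp only [LinearMap.rTensor_tmul, TensorProduct.comm_tmul, LinearMap.mul'_apply,
      AddMonoidHom.coe_toIntLinearMap, AddMonoidHom.coe_comp, Function.comp_apply,
      AddMonoidHom.add_apply, map_add, mul_add]
  | add x y hx hy => simp only [map_add, hx, hy]; abel

theorem rharp_mulLeft_comp (r : R) (φ : A →+ R) (a : A) :
    H.rharp ((AddMonoidHom.mulLeft r).comp φ) a = H.rharp φ a * H.right.t r := by
  unfold rharp
  induction H.right.Δ a using TensorProduct.induction_on with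
  | zero => simp
  | tmul u v =>
    simp only [LinearMap.rTensor_tmul, TensorProduct.comm_tmul, LinearMap.mul'_apply,
      AddMonoidHom.coe_toIntLinearMap, AddMonoidHom.coe_comp, Function.comp_apply,
      AddMonoidHom.coe_mulLeft, H.right.t_mul, mul_assoc]
  | add x y hx hy => simp only [map_add, hx, hy, add_mul]

variable {H}

theorem InAstarR.add {φ₁ φ₂ : A →+ R} (h₁ : H.InAstarR φ₁) (h₂ : H.InAstarR φ₂) :
    H.InAstarR (φ₁ + φ₂) := fun a r => by
  simp only [AddMonoidHom.add_apply, h₁ a r, h₂ a r, add_mul]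

theorem InAstarR.mulLeft_comp {φ : A →+ R} (hφ : H.InAstarR φ) (r : R) :
    H.InAstarR ((AddMonoidHom.mulLeft r).comp φ) := fun a r' => by
  simp only [AddMonoidHom.coe_comp, Function.comp_apply, AddMonoidHom.coe_mulLeft, hφ a r',
    mul_assoc]

theorem lharp_injective_of_rharp_surjective {a : A}
    (h : Surjective (fun φ : {φ : A →+ R // H.InAstarR φ} => H.rharp φ.1 a)) :
    Injective (fun ψ : {ψ : A →+ R // H.InstarAR ψ} => H.lharp ψ.1 a) := by
  intro ψ₁ ψ₂ hψ
  ext x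
  obtain ⟨β, rfl⟩ := h x
  simp only at hψ ⊢
  rw [← H.apply_lharp_eq_apply_rharp β.2 ψ₁.2, ← H.apply_lharp_eq_apply_rharp β.2 ψ₂.2, hψ]

section Inverse

variable {a : A} (h : Bijective (fun φ : {φ : A →+ R // H.InAstarR φ} => H.rharp φ.1 a))

noncomputable def rharpInv : A → {φ : A →+ R // H.InAstarR φ} :=
  (Equiv.ofBijective _ h).symm

theorem rharp_rharpInv (x : A) : H.rharp (rharpInv h x).1 a = x :=
  (Equiv.ofBijective _ h).apply_symm_apply x

theorem rharpInv_rharp {φ : A →+ R} (hφ : H.InAstarR φ) :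
    (rharpInv h (H.rharp φ a)).1 = φ :=
  congrArg Subtype.val ((Equiv.ofBijective _ h).symm_apply_apply ⟨φ, hφ⟩)

theorem rharpInv_add (x y : A) :
    (rharpInv h (x + y)).1 = (rharpInv h x).1 + (rharpInv h y).1 := by
  conv_lhs => rw [← rharp_rharpInv h x, ← rharp_rharpInv h y, ← rharp_add]
  exact rharpInv_rharp h ((rharpInv h x).2.add (rharpInv h y).2)

theorem rharpInv_mul_t (x : A) (r : R) :
    (rharpInv h (x * H.right.t r)).1 = (AddMonoidHom.mulLeft r).comp (rharpInv h x).1 := by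
  conv_lhs => rw [← rharp_rharpInv h x, ← rharp_mulLeft_comp]
  exact rharpInv_rharp h ((rharpInv h x).2.mulLeft_comp r)

noncomputable def evalRharpInv (v : A) : A →+ R :=
  AddMonoidHom.mk' (fun x => (rharpInv h x).1 v) fun x y => by
    simp only [rharpInv_add, AddMonoidHom.add_apply]

theorem instarAR_evalRharpInv (v : A) : H.InstarAR (evalRharpInv h v) := fun x r => by
  simp only [evalRharpInv, AddMonoidHom.mk'_apply, rharpInv_mul_t, AddMonoidHom.coe_comp,
    Function.comp_apply, AddMonoidHom.coe_mulLeft]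

theorem apply_lharp_evalRharpInv {β : A →+ R} (hβ : H.InAstarR β) (v : A) :
    β (H.lharp (evalRharpInv h v) a) = β v := by
  rw [H.apply_lharp_eq_apply_rharp hβ (instarAR_evalRharpInv h v)]
  simp only [evalRharpInv, AddMonoidHom.mk'_apply, rharpInv_rharp h hβ]

end Inverse

theorem lharp_surjective_of_rharp_bijective {a : A}
    (hfg : ∃ (n : ℕ) (b : Fin n → A) (β : Fin n → (A →+ R)),
      (∀ i, H.InAstarR (β i)) ∧ ∀ x : A, x = ∑ i, b i * H.right.s (β i x))
    (h : Bijective (fun φ : {φ : A →+ R // H.InAstarR φ} => H.rharp φ.1 a)) :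
    Surjective (fun ψ : {ψ : A →+ R // H.InstarAR ψ} => H.lharp ψ.1 a) := by
  obtain ⟨n, b, β, hβ, hdual⟩ := hfg
  intro v
  refine ⟨⟨evalRharpInv h v, instarAR_evalRharpInv h v⟩, ?_⟩
  dsimp only
  rw [hdual (H.lharp _ a)]
  simp only [apply_lharp_evalRharpInv h (hβ _)]
  exact (hdual v).symm

end SymHopfAlgebroid
end HopfAlgd

open HopfAlgd in
/-- (Lemma 5.17.)  If the module `A^R` is finitely generated projective,
then a left integral `ℓ` is non-degenerate as soon as the single map
`ℓ_R : A^* → A, φ ↦ φ ⇀ ℓ` is bijective. -/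
theorem statement19 {A L R : Type*} [Ring A] [Ring L] [Ring R]
    (H : SymHopfAlgebroid A L R)
    (hfg : ∃ (n : ℕ) (b : Fin n → A) (β : Fin n → (A →+ R)),
      (∀ i, H.InAstarR (β i)) ∧ ∀ a : A, a = ∑ i, b i * H.right.s (β i a))
    (ℓ : A) (hint : H.IsLeftIntegral ℓ) :
    H.IsNonDegLeftIntegral ℓ ↔
      Function.Bijective (fun φ : {φ : A →+ R // H.InAstarR φ} => H.rharp φ.1 ℓ) :=
  ⟨fun h => h.2.1, fun h => ⟨hint, h, SymHopfAlgebroid.lharp_injective_of_rharp_surjective h.2,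
    SymHopfAlgebroid.lharp_surjective_of_rharp_bijective hfg h⟩⟩
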